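/- arXiv:2312.15706 — 6 statements merged into one kernel-verified Lean document; each statement's English description precedes it below -/
import Mathlib

section
/- For every pair (x, y) ∈ ℝⁿ × ℝⁿ that is feasible for (SPOref) (i.e. x ∈ X and x_i·y_i = 0 for every i), one has ρ·‖x‖₀ ≤ p(y) − M. -/
open Filter Topology

/-- The "ℓ₀-norm": number of nonzero components. -/
noncomputable def norm0 {n : ℕ} (x : Fin n → ℝ) : ℕ := Set.ncard {i | x i ≠ 0}

/-- For every pair (x, y) feasible for (SPOref), one has
ρ‖x‖₀ ≤ p(y) − M. -/
theorem stmt_0 {n : ℕ} (hn : 1 ≤ n) {ρ : ℝ} (hρ : 0 < ρ)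
    (p : Fin n → ℝ → ℝ) (s : Fin n → ℝ)
    (hconv : ∀ i, ConvexOn ℝ Set.univ (p i))
    (hspos : ∀ i, 0 < s i)
    (hmin : ∀ i t, p i (s i) ≤ p i t)
    (hstrict : ∀ i t, t ≠ s i → p i (s i) < p i t)
    (hscale : ∀ i, p i 0 - p i (s i) = ρ)
    (X : Set (Fin n → ℝ)) (hXne : X.Nonempty) (hXcl : IsClosed X)
    (f : (Fin n → ℝ) → ℝ) (hf : Continuous f)
    (x y : Fin n → ℝ) (hxX : x ∈ X) (hfeas : ∀ i, x i * y i = 0) :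
    ρ * (norm0 x : ℝ) ≤ (∑ i, p i (y i)) - ∑ i, p i (s i) := by
  classical
  set S : Finset (Fin n) := Finset.univ.filter (fun i => x i ≠ 0) with hS
  have hcard : norm0 x = S.card := by
    rw [norm0, Set.ncard_eq_toFinset_card']
    congr 1
    ext i
    simp [hS]
  rw [hcard, ← Finset.sum_sub_distrib]
  have h1 : ρ * (S.card : ℝ) = ∑ i ∈ S, (p i (y i) - p i (s i)) := by
    rw [Finset.sum_congr rfl (fun i hi => ?_), Finset.sum_const, nsmul_eq_mul, mul_comm]
    have hx : x i ≠ 0 := by simpa [hS] using hi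
    have hy : y i = 0 := by
      rcases mul_eq_zero.mp (hfeas i) with h | h
      · exact absurd h hx
      · exact h
    rw [hy, hscale i]
  rw [h1]
  exact Finset.sum_le_sum_of_subset_of_nonneg (Finset.subset_univ S)
    fun i _ _ => sub_nonneg.mpr (hmin i (y i))
end

section
/- A pair (x, y) ∈ ℝⁿ × ℝⁿ that is feasible for (SPOref) satisfies ρ·‖x‖₀ = p(y) − M if and only if y_i = s_i for every i ∈ I₀(x). -/
open Filter Topology

/-- A pair (x, y) feasible for (SPOref) satisfies
ρ‖x‖₀ = p(y) − M if and only if y_i = s_i for every i ∈ I₀(x). -/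
theorem stmt_1 {n : ℕ} (hn : 1 ≤ n) {ρ : ℝ} (hρ : 0 < ρ)
    (p : Fin n → ℝ → ℝ) (s : Fin n → ℝ)
    (hconv : ∀ i, ConvexOn ℝ Set.univ (p i))
    (hspos : ∀ i, 0 < s i)
    (hmin : ∀ i t, p i (s i) ≤ p i t)
    (hstrict : ∀ i t, t ≠ s i → p i (s i) < p i t)
    (hscale : ∀ i, p i 0 - p i (s i) = ρ)
    (X : Set (Fin n → ℝ)) (hXne : X.Nonempty) (hXcl : IsClosed X)
    (f : (Fin n → ℝ) → ℝ) (hf : Continuous f)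
    (x y : Fin n → ℝ) (hxX : x ∈ X) (hfeas : ∀ i, x i * y i = 0) :
    ρ * (norm0 x : ℝ) = (∑ i, p i (y i)) - ∑ i, p i (s i) ↔
      ∀ i, x i = 0 → y i = s i := by
  classical
  set A := Finset.univ.filter (fun i => x i ≠ 0) with hA
  have hnorm : (norm0 x : ℝ) = A.card := by
    unfold norm0
    congr 1
    rw [show {i | x i ≠ 0} = (A : Set (Fin n)) by ext i; simp [hA]]
    exact Set.ncard_coe_finset A
  have hsplit : (∑ i, p i (y i)) - ∑ i, p i (s i) = ∑ i, (p i (y i) - p i (s i)) := by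
    rw [Finset.sum_sub_distrib]
  have hA_term : ∀ i ∈ A, p i (y i) - p i (s i) = ρ := by
    intro i hi
    simp only [hA, Finset.mem_filter, Finset.mem_univ, true_and] at hi
    have hy : y i = 0 := by
      rcases mul_eq_zero.mp (hfeas i) with h | h
      · exact absurd h hi
      · exact h
    rw [hy]; exact hscale i
  have hsum : ∑ i, (p i (y i) - p i (s i)) = ρ * A.card + ∑ i ∈ Aᶜ, (p i (y i) - p i (s i)) := by
    rw [← Finset.sum_add_sum_compl A]
    congr 1
    rw [Finset.sum_congr rfl hA_term, Finset.sum_const, nsmul_eq_mul, mul_comm]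
  have hnonneg : ∀ i ∈ Aᶜ, 0 ≤ p i (y i) - p i (s i) := fun i _ => sub_nonneg.mpr (hmin i (y i))
  constructor
  · intro h i hx
    have h0 : ∑ i ∈ Aᶜ, (p i (y i) - p i (s i)) = 0 := by
      rw [hnorm, hsplit, hsum] at h; linarith
    have hiA : i ∈ Aᶜ := by simp [hA, hx]
    have hz := (Finset.sum_eq_zero_iff_of_nonneg hnonneg).mp h0 i hiA
    by_contra hne
    have := hstrict i (y i) hne
    linarith
  · intro h
    rw [hnorm, hsplit, hsum]
    have hz : ∑ i ∈ Aᶜ, (p i (y i) - p i (s i)) = 0 := Finset.sum_eq_zero (fun i hi => by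
      have hx : x i = 0 := by simpa [hA] using hi
      rw [h i hx]; ring)
    rw [hz]; ring
end

section
/- If (x*, y*) is a local minimum of (SPOref), then y*_i = s_i for every i ∈ I₀(x*); consequently y* = y(x*), i.e. y*_i = s_i if x*_i = 0 and y*_i = 0 otherwise. -/
open Filter Topology

/-- If (x*, y*) is a local minimum of (SPOref), then y*_i = s_i
for every i ∈ I₀(x*); consequently y*_i = s_i if x*_i = 0 and y*_i = 0
otherwise. -/
theorem stmt_2 {n : ℕ} (hn : 1 ≤ n) {ρ : ℝ} (hρ : 0 < ρ)
    (p : Fin n → ℝ → ℝ) (s : Fin n → ℝ)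
    (hconv : ∀ i, ConvexOn ℝ Set.univ (p i))
    (hspos : ∀ i, 0 < s i)
    (hmin : ∀ i t, p i (s i) ≤ p i t)
    (hstrict : ∀ i t, t ≠ s i → p i (s i) < p i t)
    (hscale : ∀ i, p i 0 - p i (s i) = ρ)
    (X : Set (Fin n → ℝ)) (hXne : X.Nonempty) (hXcl : IsClosed X)
    (f : (Fin n → ℝ) → ℝ) (hf : Continuous f)
    (xstar ystar : Fin n → ℝ)
    -- (x*, y*) is feasible for (SPOref):
    (hxX : xstar ∈ X) (hfeas : ∀ i, xstar i * ystar i = 0)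
    -- and is a local minimum of (SPOref):
    (hlocmin : ∃ ε > (0 : ℝ), ∀ x y : Fin n → ℝ, x ∈ X → (∀ i, x i * y i = 0) →
      dist x xstar < ε → dist y ystar < ε →
      f xstar + ∑ i, p i (ystar i) ≤ f x + ∑ i, p i (y i)) :
    ∀ i, (xstar i = 0 → ystar i = s i) ∧ (xstar i ≠ 0 → ystar i = 0) := by

  obtain ⟨ε, hε, hloc⟩ := hlocmin
  intro i
  constructor
  · intro hx0
    by_contra hy
    have hlt : p i (s i) < p i (ystar i) := hstrict i _ hy
    set δ := |s i - ystar i| with hδ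
    have hδpos : 0 < δ := abs_pos.mpr (sub_ne_zero.mpr fun h => hy h.symm)
    set t := min (1/2 : ℝ) (ε/(2*δ)) with ht
    have ht0 : 0 < t := lt_min (by norm_num) (div_pos hε (by linarith))
    have ht1 : t ≤ 1/2 := min_le_left _ _
    have htε : t * δ < ε := by
      have h2 : t ≤ ε/(2*δ) := min_le_right _ _
      have h3 : t * δ ≤ ε/(2*δ) * δ := mul_le_mul_of_nonneg_right h2 hδpos.le
      have h4 : ε/(2*δ) * δ = ε/2 := by field_simp
      linarith
    set c := ystar i + t*(s i - ystar i) with hc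
    set y := Function.update ystar i c with hyd
    have hfeasy : ∀ j, xstar j * y j = 0 := by
      intro j
      by_cases hj : j = i
      · subst hj; simp [hyd, hx0]
      · simpa [hyd, Function.update_of_ne hj] using hfeas j
    have hdy : dist y ystar < ε := by
      rw [dist_pi_lt_iff hε]
      intro j
      by_cases hj : j = i
      · subst hj
        simp only [hyd, Function.update_self, Real.dist_eq, hc]
        rw [add_sub_cancel_left, abs_mul, abs_of_pos ht0]
        exact htε
      · simpa [hyd, Function.update_of_ne hj] using hε
    have hkey := hloc xstar y hxX hfeasy (by simpa using hε) hdy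
    have hcval : p i c < p i (ystar i) := by
      have hconvi := (hconv i).2 (Set.mem_univ (ystar i)) (Set.mem_univ (s i))
        (by linarith : (0:ℝ) ≤ 1 - t) (le_of_lt ht0) (by ring)
      have heq : (1-t) • ystar i + t • s i = c := by simp [hc, smul_eq_mul]; ring
      rw [heq] at hconvi
      calc p i c ≤ (1-t) * p i (ystar i) + t * p i (s i) := hconvi
        _ < (1-t) * p i (ystar i) + t * p i (ystar i) := by nlinarith
        _ = p i (ystar i) := by ring
    have h1 : ∑ j, p j (y j) = p i (y i) + ∑ j ∈ Finset.univ.erase i, p j (y j) :=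
      (Finset.add_sum_erase _ _ (Finset.mem_univ i)).symm
    have h2 : ∑ j, p j (ystar j) = p i (ystar i) + ∑ j ∈ Finset.univ.erase i, p j (ystar j) :=
      (Finset.add_sum_erase _ _ (Finset.mem_univ i)).symm
    have h3 : ∑ j ∈ Finset.univ.erase i, p j (y j) = ∑ j ∈ Finset.univ.erase i, p j (ystar j) := by
      apply Finset.sum_congr rfl
      intro j hj
      rw [hyd, Function.update_of_ne (Finset.ne_of_mem_erase hj)]
    have hyi : y i = c := Function.update_self _ _ _
    rw [h1, h2, h3, hyi] at hkey
    linarith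
  · intro hx
    exact (mul_eq_zero.mp (hfeas i)).resolve_left hx
end

section
/- A point x* ∈ X is a local minimum of (SPO) if and only if the pair (x*, y(x*)) is a local minimum of (SPOref). -/
open Filter Topology

open Classical in
/-- The canonical auxiliary vector y(x): y(x)_i = s_i if x_i = 0 and 0 otherwise. -/
noncomputable def yOf {n : ℕ} (s : Fin n → ℝ) (x : Fin n → ℝ) : Fin n → ℝ :=
  fun i => if x i = 0 then s i else 0

open Classical in
lemma norm0_eq_card {n : ℕ} (x : Fin n → ℝ) :
    norm0 x = (Finset.univ.filter (fun i => x i ≠ 0)).card := by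
  unfold norm0
  rw [← Set.ncard_coe_finset]
  congr 1
  ext i
  simp

/-- A point x* ∈ X is a local minimum of (SPO) if and only if
the pair (x*, y(x*)) is a local minimum of (SPOref). -/
theorem stmt_3 {n : ℕ} (hn : 1 ≤ n) {ρ : ℝ} (hρ : 0 < ρ)
    (p : Fin n → ℝ → ℝ) (s : Fin n → ℝ)
    (hconv : ∀ i, ConvexOn ℝ Set.univ (p i))
    (hspos : ∀ i, 0 < s i)
    (hmin : ∀ i t, p i (s i) ≤ p i t)
    (hstrict : ∀ i t, t ≠ s i → p i (s i) < p i t)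
    (hscale : ∀ i, p i 0 - p i (s i) = ρ)
    (X : Set (Fin n → ℝ)) (hXne : X.Nonempty) (hXcl : IsClosed X)
    (f : (Fin n → ℝ) → ℝ) (hf : Continuous f)
    (xstar : Fin n → ℝ) (hxX : xstar ∈ X) :
    -- x* is a local minimum of (SPO) ...
    (∃ ε > (0 : ℝ), ∀ x ∈ X, dist x xstar < ε →
        f xstar + ρ * (norm0 xstar : ℝ) ≤ f x + ρ * (norm0 x : ℝ)) ↔
    -- ... iff (x*, y(x*)) is a local minimum of (SPOref)
    (∃ ε > (0 : ℝ), ∀ x y : Fin n → ℝ, x ∈ X → (∀ i, x i * y i = 0) →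
        dist x xstar < ε → dist y (yOf s xstar) < ε →
        f xstar + ∑ i, p i (yOf s xstar i) ≤ f x + ∑ i, p i (y i)) := by
  classical
  set M : ℝ := ∑ i, p i (s i) with hM
  -- the basic sum computation
  have hsum : ∀ x : Fin n → ℝ,
      ∑ i, (p i (s i) + if x i = 0 then (0:ℝ) else ρ) = M + ρ * (norm0 x : ℝ) := by
    intro x
    rw [Finset.sum_add_distrib]
    congr 1
    rw [norm0_eq_card]
    have : ∑ i, (if x i = 0 then (0:ℝ) else ρ)
        = ∑ i ∈ Finset.univ.filter (fun i => x i ≠ 0), ρ := by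
      rw [Finset.sum_filter]
      apply Finset.sum_congr rfl
      intro i _
      by_cases h : x i = 0 <;> simp [h]
    rw [this, Finset.sum_const, nsmul_eq_mul, mul_comm]
  -- (A): value of the objective at yOf
  have hA : ∀ x : Fin n → ℝ, ∑ i, p i (yOf s x i) = M + ρ * (norm0 x : ℝ) := by
    intro x
    rw [← hsum x]
    apply Finset.sum_congr rfl
    intro i _
    by_cases h : x i = 0
    · simp [yOf, h]
    · simp only [yOf, h, if_false]
      linarith [hscale i]
  -- (B): lower bound for any feasible y
  have hB : ∀ x y : Fin n → ℝ, (∀ i, x i * y i = 0) →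
      M + ρ * (norm0 x : ℝ) ≤ ∑ i, p i (y i) := by
    intro x y hxy
    rw [← hsum x]
    apply Finset.sum_le_sum
    intro i _
    by_cases h : x i = 0
    · simpa [h] using hmin i (y i)
    · have hy : y i = 0 := by
        rcases mul_eq_zero.mp (hxy i) with h' | h'
        · exact absurd h' h
        · exact h'
      simp only [h, if_false, hy]
      linarith [hscale i]
  constructor
  · -- forward
    rintro ⟨ε, hε, hloc⟩
    refine ⟨ε, hε, ?_⟩
    intro x y hxX' hfeas hdx _
    rw [hA xstar]
    have h1 := hloc x hxX' hdx
    have h2 := hB x y hfeas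
    linarith
  · -- backward
    rintro ⟨ε, hε, hloc⟩
    -- δ1 from continuity of f
    obtain ⟨δ1, hδ1pos, hδ1⟩ := Metric.continuous_iff.mp hf xstar ρ hρ
    -- δ2 : preserve support
    have hδ2 : ∃ δ2 > (0:ℝ), ∀ x : Fin n → ℝ, dist x xstar < δ2 →
        ∀ i, xstar i ≠ 0 → x i ≠ 0 := by
      by_cases h : (Finset.univ.filter (fun i => xstar i ≠ 0)).Nonempty
      · refine ⟨(Finset.univ.filter (fun i => xstar i ≠ 0)).inf' h (fun i => |xstar i|),
          ?_, ?_⟩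
        · rw [gt_iff_lt, Finset.lt_inf'_iff]
          intro i hi
          simp only [Finset.mem_filter] at hi
          exact abs_pos.mpr hi.2
        · intro x hx i hi hxi0
          have h1 : |x i - xstar i| ≤ dist x xstar := by
            simpa [Real.dist_eq] using dist_le_pi_dist x xstar i
          have h2 : (Finset.univ.filter (fun i => xstar i ≠ 0)).inf'
              h (fun i => |xstar i|) ≤ |xstar i| :=
            Finset.inf'_le _ (by simp [hi])
          rw [hxi0, zero_sub, abs_neg] at h1
          linarith
      · refine ⟨1, one_pos, ?_⟩
        intro x _ i hi
        exact absurd (Finset.filter_nonempty_iff.mpr ⟨i, Finset.mem_univ i, hi⟩) h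
    obtain ⟨δ2, hδ2pos, hδ2⟩ := hδ2
    refine ⟨min ε (min δ1 δ2), by positivity, ?_⟩
    intro x hxX' hdx
    have hdε : dist x xstar < ε := lt_of_lt_of_le hdx (min_le_left _ _)
    have hd1 : dist x xstar < δ1 :=
      lt_of_lt_of_le hdx (le_trans (min_le_right _ _) (min_le_left _ _))
    have hd2 : dist x xstar < δ2 :=
      lt_of_lt_of_le hdx (le_trans (min_le_right _ _) (min_le_right _ _))
    have hsupp : ∀ i, xstar i ≠ 0 → x i ≠ 0 := hδ2 x hd2
    have hsub : (Finset.univ.filter (fun i => xstar i ≠ 0)) ⊆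
        (Finset.univ.filter (fun i => x i ≠ 0)) := by
      intro i hi
      simp only [Finset.mem_filter, Finset.mem_univ, true_and] at hi ⊢
      exact hsupp i hi
    have hle : norm0 xstar ≤ norm0 x := by
      rw [norm0_eq_card, norm0_eq_card]
      exact Finset.card_le_card hsub
    rcases eq_or_lt_of_le hle with heq | hlt
    · -- same support
      have hFeq : (Finset.univ.filter (fun i => xstar i ≠ 0)) =
          (Finset.univ.filter (fun i => x i ≠ 0)) := by
        apply Finset.eq_of_subset_of_card_le hsub
        rw [← norm0_eq_card, ← norm0_eq_card]
        exact le_of_eq heq.symm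
      have hiff : ∀ i, x i = 0 → xstar i = 0 := by
        intro i hxi
        by_contra hxs
        have : i ∈ Finset.univ.filter (fun i => x i ≠ 0) := by
          rw [← hFeq]; simp [hxs]
        simp [hxi] at this
      have hfeas : ∀ i, x i * yOf s xstar i = 0 := by
        intro i
        by_cases h : x i = 0
        · simp [h]
        · have hxs : xstar i ≠ 0 := by
            have hmem : i ∈ Finset.univ.filter (fun i => x i ≠ 0) := by simp [h]
            rw [← hFeq] at hmem
            simpa using hmem
          simp [yOf, hxs]
      have hkey := hloc x (yOf s xstar) hxX' hfeas hdε
        (by rw [dist_self]; exact hε)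
      rw [hA xstar] at hkey
      have hcast : (norm0 xstar : ℝ) = (norm0 x : ℝ) := by exact_mod_cast heq
      rw [← hcast]
      linarith
    · -- strictly more nonzeros
      have hc : (norm0 xstar : ℝ) + 1 ≤ (norm0 x : ℝ) := by exact_mod_cast hlt
      have hfd := hδ1 x hd1
      rw [Real.dist_eq, abs_lt] at hfd
      have hmul : ρ * ((norm0 xstar : ℝ) + 1) ≤ ρ * (norm0 x : ℝ) :=
        mul_le_mul_of_nonneg_left hc hρ.le
      linarith
end

section
/- A point x* ∈ X is a global minimum of (SPO) if and only if the pair (x*, y(x*)) is a global minimum of (SPOref). -/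
open Filter Topology

/-- A point x* ∈ X is a global minimum of (SPO) if and only if
the pair (x*, y(x*)) is a global minimum of (SPOref). -/
theorem stmt_4 {n : ℕ} (hn : 1 ≤ n) {ρ : ℝ} (hρ : 0 < ρ)
    (p : Fin n → ℝ → ℝ) (s : Fin n → ℝ)
    (hconv : ∀ i, ConvexOn ℝ Set.univ (p i))
    (hspos : ∀ i, 0 < s i)
    (hmin : ∀ i t, p i (s i) ≤ p i t)
    (hstrict : ∀ i t, t ≠ s i → p i (s i) < p i t)
    (hscale : ∀ i, p i 0 - p i (s i) = ρ)
    (X : Set (Fin n → ℝ)) (hXne : X.Nonempty) (hXcl : IsClosed X)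
    (f : (Fin n → ℝ) → ℝ) (hf : Continuous f)
    (xstar : Fin n → ℝ) (hxX : xstar ∈ X) :
    -- x* is a global minimum of (SPO) ...
    (∀ x ∈ X, f xstar + ρ * (norm0 xstar : ℝ) ≤ f x + ρ * (norm0 x : ℝ)) ↔
    -- ... iff (x*, y(x*)) is a global minimum of (SPOref)
    (∀ x y : Fin n → ℝ, x ∈ X → (∀ i, x i * y i = 0) →
        f xstar + ∑ i, p i (yOf s xstar i) ≤ f x + ∑ i, p i (y i)) := by
  classical
  -- Key identity: ∑ p i (yOf s x i) = ∑ p i (s i) + ρ * norm0 x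
  have key : ∀ x : Fin n → ℝ,
      ∑ i, p i (yOf s x i) = (∑ i, p i (s i)) + ρ * (norm0 x : ℝ) := by
    intro x
    have h1 : ∀ i : Fin n,
        p i (yOf s x i) = p i (s i) + (if x i = 0 then (0:ℝ) else ρ) := by
      intro i
      by_cases h : x i = 0 <;> simp [yOf, h]
      · linarith [hscale i]
    rw [Finset.sum_congr rfl (fun i _ => h1 i), Finset.sum_add_distrib]
    congr 1
    have hcard : (norm0 x : ℝ) =
        ((Finset.univ.filter (fun i => ¬ x i = 0)).card : ℝ) := by
      unfold norm0
      rw [Set.ncard_eq_toFinset_card']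
      congr 2
      ext i
      simp
    rw [hcard, Finset.sum_ite, Finset.sum_const, Finset.sum_const]
    simp [mul_comm]
  -- Lower bound: for feasible y, ∑ p i (yOf s x i) ≤ ∑ p i (y i)
  have lb : ∀ (x y : Fin n → ℝ), (∀ i, x i * y i = 0) →
      ∑ i, p i (yOf s x i) ≤ ∑ i, p i (y i) := by
    intro x y hfeas
    apply Finset.sum_le_sum
    intro i _
    by_cases h : x i = 0
    · simp only [yOf, h, if_true]
      exact hmin i (y i)
    · have hy : y i = 0 := by
        rcases mul_eq_zero.mp (hfeas i) with h' | h'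
        · exact absurd h' h
        · exact h'
      simp [yOf, h, hy]
  constructor
  · intro hSPO x y hxXm hfeas
    have h1 := hSPO x hxXm
    have h2 := lb x y hfeas
    have h3 := key xstar
    have h4 := key x
    linarith
  · intro hRef x hxXm
    have hfeas : ∀ i, x i * yOf s x i = 0 := by
      intro i
      by_cases h : x i = 0 <;> simp [yOf, h]
    have h1 := hRef x (yOf s x) hxXm hfeas
    have h3 := key xstar
    have h4 := key x
    linarith
end

section
/- Let x* ∈ X and set y* := y(x*). Then x* is S-stationary for (SPO) if and only if (x*, y*) is a KKT point of (SPOref). -/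
/-!
Both directions are checked coordinate by coordinate. On the support of x*, complementarity
forces ν_k = 0 and y*_k = 0, so the x-row of the KKT system of (SPOref) is exactly the vanishing
of ∂L/∂x_k. Conversely, from S-stationarity take ν = 0: where x*_k = 0 we have y*_k = s_k ≠ 0,
so γ_k = -(∂L/∂x_k)/s_k absorbs the x-row, and the y-row holds because p_k'(s_k) = 0 at the
minimiser s_k; where x*_k ≠ 0 the x-row is S-stationarity and γ_k = -p_k'(0)/x*_k solves the y-row.
-/

open Filter Topology

noncomputable section

/-- Euclidean n-space. -/
abbrev E (n : ℕ) : Type := EuclideanSpace ℝ (Fin n)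

/-- The SP-Lagrangian L(x, λ, μ) = f(x) + λᵀg(x) + μᵀh(x). -/
def LSP {n m q : ℕ} (f : E n → ℝ) (g : Fin m → E n → ℝ) (h : Fin q → E n → ℝ)
    (lam : Fin m → ℝ) (mu : Fin q → ℝ) (x : E n) : ℝ :=
  f x + (∑ i, lam i * g i x) + (∑ j, mu j * h j x)

/-- S-stationarity of x* for (SPO). -/
def SStat {n m q : ℕ} (f : E n → ℝ) (g : Fin m → E n → ℝ) (h : Fin q → E n → ℝ)
    (xstar : E n) : Prop :=
  ∃ (lam : Fin m → ℝ) (mu : Fin q → ℝ),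
    (∀ i, 0 ≤ lam i) ∧ (∀ i, lam i * g i xstar = 0) ∧
    ∀ i, xstar i ≠ 0 → gradient (LSP f g h lam mu) xstar i = 0

/-- KKT point of the reformulation (SPOref). -/
def KKTref {n m q : ℕ} (f : E n → ℝ) (g : Fin m → E n → ℝ) (h : Fin q → E n → ℝ)
    (p : Fin n → ℝ → ℝ) (x y : E n) : Prop :=
  (∀ i, g i x ≤ 0) ∧ (∀ j, h j x = 0) ∧ (∀ i, 0 ≤ x i) ∧ (∀ i, x i * y i = 0) ∧
  ∃ (lam : Fin m → ℝ) (mu : Fin q → ℝ) (ν γ : Fin n → ℝ),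
    (∀ i, 0 ≤ lam i) ∧ (∀ i, lam i * g i x = 0) ∧
    (∀ i, 0 ≤ ν i) ∧ (∀ i, ν i * x i = 0) ∧
    (∀ k, gradient f x k + (∑ i, lam i * gradient (g i) x k) +
        (∑ j, mu j * gradient (h j) x k) - ν k + γ k * y k = 0) ∧
    (∀ i, deriv (p i) (y i) + γ i * x i = 0)

theorem EuclideanSpace.gradient_apply {ι : Type*} [Fintype ι] [DecidableEq ι]
    (φ : EuclideanSpace ℝ ι → ℝ) (x : EuclideanSpace ℝ ι) (k : ι) :
    gradient φ x k = fderiv ℝ φ x (EuclideanSpace.single k 1) := by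
  rw [← inner_gradient_left, EuclideanSpace.inner_single_right, one_mul]
  rfl

section
variable {n m q : ℕ} {f : E n → ℝ} {g : Fin m → E n → ℝ} {h : Fin q → E n → ℝ} {x : E n}

theorem gradient_LSP_apply (hf : DifferentiableAt ℝ f x)
    (hg : ∀ i, DifferentiableAt ℝ (g i) x) (hh : ∀ j, DifferentiableAt ℝ (h j) x)
    (lam : Fin m → ℝ) (mu : Fin q → ℝ) (k : Fin n) :
    gradient (LSP f g h lam mu) x k =
      gradient f x k + (∑ i, lam i * gradient (g i) x k) + (∑ j, mu j * gradient (h j) x k) := by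
  have hG : DifferentiableAt ℝ (fun y => ∑ i, lam i * g i y) x :=
    .fun_sum fun i _ => (hg i).const_mul (lam i)
  have hH : DifferentiableAt ℝ (fun y => ∑ j, mu j * h j y) x :=
    .fun_sum fun j _ => (hh j).const_mul (mu j)
  simp only [EuclideanSpace.gradient_apply]
  unfold LSP
  rw [fderiv_fun_add (hf.fun_add hG) hH, fderiv_fun_add hf hG,
    fderiv_fun_sum fun i _ => (hg i).const_mul (lam i),
    fderiv_fun_sum fun j _ => (hh j).const_mul (mu j)]
  simp [fderiv_const_mul, hg, hh]

theorem KKTref.sStat {p : Fin n → ℝ → ℝ} {y : E n} (hf : DifferentiableAt ℝ f x)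
    (hg : ∀ i, DifferentiableAt ℝ (g i) x) (hh : ∀ j, DifferentiableAt ℝ (h j) x)
    (hK : KKTref f g h p x y) : SStat f g h x := by
  obtain ⟨-, -, -, hxy, lam, mu, ν, γ, hlam, hcompl, -, hνx, hstat, -⟩ := hK
  refine ⟨lam, mu, hlam, hcompl, fun k hk => ?_⟩
  have hνk : ν k = 0 := (mul_eq_zero.mp (hνx k)).resolve_right hk
  have hyk : y k = 0 := (mul_eq_zero.mp (hxy k)).resolve_left hk
  simpa [gradient_LSP_apply hf hg hh, hνk, hyk] using hstat k

theorem SStat.kktRef (p : Fin n → ℝ → ℝ) {s : Fin n → ℝ} (hs : ∀ i, s i ≠ 0)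
    (hps : ∀ i, deriv (p i) (s i) = 0) {y : E n}
    (hy : ∀ i, (x i = 0 → y i = s i) ∧ (x i ≠ 0 → y i = 0))
    (hgx : ∀ i, g i x ≤ 0) (hhx : ∀ j, h j x = 0) (hxnn : ∀ i, 0 ≤ x i)
    (hf : DifferentiableAt ℝ f x)
    (hg : ∀ i, DifferentiableAt ℝ (g i) x) (hh : ∀ j, DifferentiableAt ℝ (h j) x)
    (hS : SStat f g h x) : KKTref f g h p x y := by
  obtain ⟨lam, mu, hlam, hcompl, hstat⟩ := hS
  refine ⟨hgx, hhx, hxnn, fun k => ?_, lam, mu, 0,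
    fun k => if x k = 0 then -gradient (LSP f g h lam mu) x k / s k else -deriv (p k) 0 / x k,
    hlam, hcompl, fun _ => le_rfl, fun _ => zero_mul _, fun k => ?_, fun k => ?_⟩
  · by_cases hk : x k = 0 <;> simp [hk, (hy k).2]
  · rw [← gradient_LSP_apply hf hg hh]
    by_cases hk : x k = 0
    · simp [hk, (hy k).1 hk, hs k]
    · simp [hk, (hy k).2 hk, hstat k hk]
  · by_cases hk : x k = 0
    · simp [hk, (hy k).1 hk, hps k]
    · simp [hk, (hy k).2 hk]
end

theorem stmt_5_general {n m q : ℕ}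
    (f : E n → ℝ) (g : Fin m → E n → ℝ) (h : Fin q → E n → ℝ)
    (hf : ContDiff ℝ 1 f) (hg : ∀ i, ContDiff ℝ 1 (g i)) (hh : ∀ j, ContDiff ℝ 1 (h j))
    (p : Fin n → ℝ → ℝ) (s : Fin n → ℝ)
    (hspos : ∀ i, 0 < s i)
    (hmin : ∀ i t, p i (s i) ≤ p i t)
    (xstar : E n)
    -- x* ∈ X :
    (hgx : ∀ i, g i xstar ≤ 0) (hhx : ∀ j, h j xstar = 0) (hxnn : ∀ i, 0 ≤ xstar i)
    -- y* := y(x*) :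
    (ystar : E n)
    (hy : ∀ i, (xstar i = 0 → ystar i = s i) ∧ (xstar i ≠ 0 → ystar i = 0)) :
    SStat f g h xstar ↔ KKTref f g h p xstar ystar := by
  have hfd := hf.differentiable one_ne_zero xstar
  have hgd := fun i => (hg i).differentiable one_ne_zero xstar
  have hhd := fun j => (hh j).differentiable one_ne_zero xstar
  have hps : ∀ i, deriv (p i) (s i) = 0 := fun i =>
    IsLocalMin.deriv_eq_zero (.of_forall (hmin i))
  exact ⟨SStat.kktRef p (fun i => (hspos i).ne') hps hy hgx hhx hxnn hfd hgd hhd,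
    KKTref.sStat hfd hgd hhd⟩

/-- Let x* ∈ X and y* := y(x*).  Then x* is S-stationary for (SPO)
if and only if (x*, y*) is a KKT point of (SPOref). -/
theorem stmt_5 {n m q : ℕ} (hn : 1 ≤ n) {ρ : ℝ} (hρ : 0 < ρ)
    (f : E n → ℝ) (g : Fin m → E n → ℝ) (h : Fin q → E n → ℝ)
    (hf : ContDiff ℝ 1 f) (hg : ∀ i, ContDiff ℝ 1 (g i)) (hh : ∀ j, ContDiff ℝ 1 (h j))
    (p : Fin n → ℝ → ℝ) (s : Fin n → ℝ)
    (hp : ∀ i, ContDiff ℝ 1 (p i))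
    (hconv : ∀ i, ConvexOn ℝ Set.univ (p i))
    (hspos : ∀ i, 0 < s i)
    (hmin : ∀ i t, p i (s i) ≤ p i t)
    (hstrict : ∀ i t, t ≠ s i → p i (s i) < p i t)
    (hscale : ∀ i, p i 0 - p i (s i) = ρ)
    (xstar : E n)
    -- x* ∈ X :
    (hgx : ∀ i, g i xstar ≤ 0) (hhx : ∀ j, h j xstar = 0) (hxnn : ∀ i, 0 ≤ xstar i)
    -- y* := y(x*) :
    (ystar : E n)
    (hy : ∀ i, (xstar i = 0 → ystar i = s i) ∧ (xstar i ≠ 0 → ystar i = 0)) :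
    SStat f g h xstar ↔ KKTref f g h p xstar ystar :=
  stmt_5_general f g h hf hg hh p s hspos hmin xstar hgx hhx hxnn ystar hy
end
end
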